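/- arXiv:2312.14066 — 2 statements merged into one kernel-verified Lean document; each statement's English description precedes it below -/
import Mathlib

section
/- Let n, f, d be positive natural numbers, let X̃₁, X̃₂ ∈ ℝ^{n×f} and W ∈ ℝ^{f×d}, and set Z¹ = X̃₁ W and Z² = X̃₂ W. Assume every column Z¹_{:i} and Z²_{:i} (1 ≤ i ≤ d) is nonzero, and let Λ¹_{ii} = ‖Z¹_{:i}‖₂ and Λ²_{ii} = ‖Z²_{:i}‖₂. Define the cross-correlation matrix M ∈ ℝ^{d×d} by M_{ij} = ⟨Z¹_{:i}, Z²_{:j}⟩ / (‖Z¹_{:i}‖₂ · ‖Z²_{:j}‖₂), and for λ > 0 define the Barlow Twins loss L_BT = Σ_{i=1}^{d} (M_{ii} − 1)² + λ Σ_{i=1}^{d} Σ_{j ≠ i} (M_{ij})². If the matrix H = X̃₁ᵀ X̃₂ ∈ ℝ^{f×f} is negative semi-definite as a quadratic form (i.e., xᵀ H x ≤ 0 for every x ∈ ℝ^f), then L_BT ≥ Σ_{i=1}^{d} ( (Λ¹_{ii} Λ²_{ii}) / ((max_{1≤k≤d} Λ¹_{kk}) · (max_{1≤k≤d} Λ²_{kk}))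 )². -/
open Matrix BigOperators RealInnerProductSpace

/-- The `i`-th column of a real matrix, viewed as a vector in Euclidean space. -/
noncomputable def matCol {n d : ℕ} (Z : Matrix (Fin n) (Fin d) ℝ) (i : Fin d) :
    EuclideanSpace ℝ (Fin n) := WithLp.toLp 2 (fun k => Z k i)

/-!
Writing `wᵢ` for the `i`-th column of `W`, the diagonal correlation `⟨Z¹_{:i}, Z²_{:i}⟩` is the
quadratic form `wᵢᵀ H wᵢ ≤ 0`, so every diagonal entry `Mᵢᵢ` is nonpositive and each term
`(Mᵢᵢ - 1)²` is at least `1`. Each summand on the right is at most `1`, since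
`Λ¹ᵢᵢ ≤ maxₖ Λ¹ₖₖ` and `Λ²ᵢᵢ ≤ maxₖ Λ²ₖₖ`; the off-diagonal part of the loss is nonnegative.
-/

theorem inner_matCol_matCol {n m p : ℕ} (A : Matrix (Fin n) (Fin m) ℝ)
    (B : Matrix (Fin n) (Fin p) ℝ) (i : Fin m) (j : Fin p) :
    ⟪matCol A i, matCol B j⟫ = (Aᵀ * B) i j := by
  simp [matCol, PiLp.inner_apply, Matrix.mul_apply, mul_comm]

theorem inner_matCol_mul_matCol_mul {n f d : ℕ} (X1 X2 : Matrix (Fin n) (Fin f) ℝ)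
    (W : Matrix (Fin f) (Fin d) ℝ) (i j : Fin d) :
    ⟪matCol (X1 * W) i, matCol (X2 * W) j⟫ = Wᵀ i ⬝ᵥ ((X1ᵀ * X2) *ᵥ Wᵀ j) := by
  rw [inner_matCol_matCol, transpose_mul, Matrix.mul_assoc, ← Matrix.mul_assoc X1ᵀ]
  rfl

theorem card_le_of_diag_nonpos {ι : Type*} [Fintype ι] [DecidableEq ι]
    (M : Matrix ι ι ℝ) {lam : ℝ} (hlam : 0 ≤ lam) (hM : ∀ i, M i i ≤ 0) :
    (Fintype.card ι : ℝ) ≤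
      (∑ i, (M i i - 1) ^ 2) + lam * ∑ i, ∑ j ∈ Finset.univ.erase i, M i j ^ 2 := by
  have hdiag : (Fintype.card ι : ℝ) ≤ ∑ i, (M i i - 1) ^ 2 := by
    simpa using Finset.sum_le_sum fun i (_ : i ∈ Finset.univ) =>
      (by nlinarith [hM i] : (1 : ℝ) ≤ (M i i - 1) ^ 2)
  have hoff : 0 ≤ lam * ∑ i, ∑ j ∈ Finset.univ.erase i, M i j ^ 2 := by positivity
  linarith

theorem sq_mul_div_mul_le_one {a b s t : ℝ} (ha : 0 ≤ a) (hb : 0 ≤ b) (has : a ≤ s)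
    (hbt : b ≤ t) : ((a * b) / (s * t)) ^ 2 ≤ 1 := by
  have hst : 0 ≤ s * t := mul_nonneg (ha.trans has) (hb.trans hbt)
  exact pow_le_one₀ (by positivity) <|
    div_le_one_of_le₀ (mul_le_mul has hbt hb (ha.trans has)) hst

theorem barlow_twins_lower_bound_general
    (n f d : ℕ) (hd : 0 < d)
    (X1 X2 : Matrix (Fin n) (Fin f) ℝ) (W : Matrix (Fin f) (Fin d) ℝ)
    (lam : ℝ) (hlam : 0 < lam)
    (Z1 Z2 : Matrix (Fin n) (Fin d) ℝ)
    (hZ1 : Z1 = X1 * W) (hZ2 : Z2 = X2 * W)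
    (Λ1 Λ2 : Fin d → ℝ)
    (hΛ1 : ∀ i, Λ1 i = ‖matCol Z1 i‖) (hΛ2 : ∀ i, Λ2 i = ‖matCol Z2 i‖)
    (M : Matrix (Fin d) (Fin d) ℝ)
    (hM : ∀ i j, M i j = ⟪matCol Z1 i, matCol Z2 j⟫ / (‖matCol Z1 i‖ * ‖matCol Z2 j‖))
    (hH : ∀ x : Fin f → ℝ, x ⬝ᵥ ((X1ᵀ * X2) *ᵥ x) ≤ 0) :
    (∑ i, (M i i - 1) ^ 2) + lam * ∑ i, ∑ j ∈ Finset.univ.erase i, (M i j) ^ 2 ≥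
      ∑ i, ((Λ1 i * Λ2 i) /
        ((Finset.univ.sup' ⟨⟨0, hd⟩, Finset.mem_univ _⟩ Λ1) *
         (Finset.univ.sup' ⟨⟨0, hd⟩, Finset.mem_univ _⟩ Λ2))) ^ 2 := by
  have hdiag : ∀ i, M i i ≤ 0 := fun i => by
    rw [hM, hZ1, hZ2, inner_matCol_mul_matCol_mul]
    exact div_nonpos_of_nonpos_of_nonneg (hH _) (by positivity)
  calc ∑ i, ((Λ1 i * Λ2 i) / (Finset.univ.sup' _ Λ1 * Finset.univ.sup' _ Λ2)) ^ 2
      ≤ ∑ _i : Fin d, (1 : ℝ) := Finset.sum_le_sum fun i _ =>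
        sq_mul_div_mul_le_one (by rw [hΛ1]; positivity) (by rw [hΛ2]; positivity)
          (Finset.le_sup' Λ1 (Finset.mem_univ i)) (Finset.le_sup' Λ2 (Finset.mem_univ i))
    _ = Fintype.card (Fin d) := by simp
    _ ≤ _ := card_le_of_diag_nonpos M hlam.le hdiag

/-- **Proposition 1 (Barlow Twins lower bound).** If the inner product
`H = X̃₁ᵀ X̃₂` of the two inputs is negative semi-definite as a quadratic form,
then the Barlow Twins loss is bounded below by
`∑ i, ((Λ¹ᵢᵢ Λ²ᵢᵢ) / (maxₖ Λ¹ₖₖ · maxₖ Λ²ₖₖ))²`. -/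
theorem barlow_twins_lower_bound
    (n f d : ℕ) (hn : 0 < n) (hf : 0 < f) (hd : 0 < d)
    (X1 X2 : Matrix (Fin n) (Fin f) ℝ) (W : Matrix (Fin f) (Fin d) ℝ)
    (lam : ℝ) (hlam : 0 < lam)
    (Z1 Z2 : Matrix (Fin n) (Fin d) ℝ)
    (hZ1 : Z1 = X1 * W) (hZ2 : Z2 = X2 * W)
    (hcol1 : ∀ i, matCol Z1 i ≠ 0) (hcol2 : ∀ i, matCol Z2 i ≠ 0)
    (Λ1 Λ2 : Fin d → ℝ)
    (hΛ1 : ∀ i, Λ1 i = ‖matCol Z1 i‖) (hΛ2 : ∀ i, Λ2 i = ‖matCol Z2 i‖)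
    (M : Matrix (Fin d) (Fin d) ℝ)
    (hM : ∀ i j, M i j = ⟪matCol Z1 i, matCol Z2 j⟫ / (‖matCol Z1 i‖ * ‖matCol Z2 j‖))
    (hH : ∀ x : Fin f → ℝ, x ⬝ᵥ ((X1ᵀ * X2) *ᵥ x) ≤ 0) :
    (∑ i, (M i i - 1) ^ 2) + lam * ∑ i, ∑ j ∈ Finset.univ.erase i, (M i j) ^ 2 ≥
      ∑ i, ((Λ1 i * Λ2 i) /
        ((Finset.univ.sup' ⟨⟨0, hd⟩, Finset.mem_univ _⟩ Λ1) *
         (Finset.univ.sup' ⟨⟨0, hd⟩, Finset.mem_univ _⟩ Λ2))) ^ 2 :=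
  barlow_twins_lower_bound_general n f d hd X1 X2 W lam hlam Z1 Z2 hZ1 hZ2 Λ1 Λ2 hΛ1 hΛ2 M hM hH
end

section
/- Let n, f, d be positive natural numbers, let X̃₁, X̃₂ ∈ ℝ^{n×f} and W ∈ ℝ^{f×d}, and set Z¹ = X̃₁ W and Z² = X̃₂ W, with every column Z¹_{:i}, Z²_{:i} nonzero. Define M_{ij} = ⟨Z¹_{:i}, Z²_{:j}⟩ / (‖Z¹_{:i}‖₂ · ‖Z²_{:j}‖₂). If H = X̃₁ᵀ X̃₂ satisfies xᵀ H x ≤ 0 for every x ∈ ℝ^f, then every diagonal entry satisfies −1 ≤ M_{ii} ≤ 0, and consequently (M_{ii} − 1)² ≥ 1 for every i. -/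
/-!
Because `Zᵏ = X̃ₖ W`, the inner product of the `i`-th columns of `Z¹` and `Z²` is the quadratic
form `W_{:i}ᵀ H W_{:i}`, which is `≤ 0`. A cosine similarity always lies in `[-1, 1]`, so a
nonpositive one lies in `[-1, 0]`, and then `(Mᵢᵢ - 1)² ≥ 1`.
-/

open Matrix BigOperators RealInnerProductSpace

lemma inner_matCol {n d : ℕ} (A B : Matrix (Fin n) (Fin d) ℝ) (i j : Fin d) :
    ⟪matCol A i, matCol B j⟫ = (Aᵀ * B) i j := by
  simp [matCol, PiLp.inner_apply, mul_apply, mul_comm]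

lemma transpose_mul_mul_apply {ι κ R : Type*} [Fintype ι] [CommSemiring R]
    (W : Matrix ι κ R) (H : Matrix ι ι R) (i j : κ) :
    (Wᵀ * H * W) i j = Wᵀ i ⬝ᵥ H *ᵥ Wᵀ j := by
  rw [dotProduct_mulVec, mul_apply', mul_apply_eq_vecMul]
  rfl

lemma inner_matCol_mul {n d : ℕ} {ι : Type*} [Fintype ι] (X₁ X₂ : Matrix (Fin n) ι ℝ)
    (W : Matrix ι (Fin d) ℝ) (i j : Fin d) :
    ⟪matCol (X₁ * W) i, matCol (X₂ * W) j⟫ = Wᵀ i ⬝ᵥ (X₁ᵀ * X₂) *ᵥ Wᵀ j := by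
  rw [inner_matCol, ← transpose_mul_mul_apply, transpose_mul, Matrix.mul_assoc, Matrix.mul_assoc,
    Matrix.mul_assoc]

lemma real_inner_div_norm_mul_norm_mem_Icc_of_inner_nonpos {F : Type*} [NormedAddCommGroup F]
    [InnerProductSpace ℝ F] {x y : F} (h : ⟪x, y⟫ ≤ 0) :
    -1 ≤ ⟪x, y⟫ / (‖x‖ * ‖y‖) ∧ ⟪x, y⟫ / (‖x‖ * ‖y‖) ≤ 0 :=
  ⟨(abs_le.mp (abs_real_inner_div_norm_mul_norm_le_one x y)).1,
    div_nonpos_of_nonpos_of_nonneg h (by positivity)⟩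

theorem diag_nonpos_of_nsd_general
    (n f d : ℕ)
    (X1 X2 : Matrix (Fin n) (Fin f) ℝ) (W : Matrix (Fin f) (Fin d) ℝ)
    (Z1 Z2 : Matrix (Fin n) (Fin d) ℝ)
    (hZ1 : Z1 = X1 * W) (hZ2 : Z2 = X2 * W)
    (M : Matrix (Fin d) (Fin d) ℝ)
    (hM : ∀ i j, M i j = ⟪matCol Z1 i, matCol Z2 j⟫ / (‖matCol Z1 i‖ * ‖matCol Z2 j‖))
    (hH : ∀ x : Fin f → ℝ, x ⬝ᵥ ((X1ᵀ * X2) *ᵥ x) ≤ 0) :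
    ∀ i, (-1 ≤ M i i ∧ M i i ≤ 0) ∧ 1 ≤ (M i i - 1) ^ 2 := by
  intro i
  have hinner : ⟪matCol Z1 i, matCol Z2 i⟫ ≤ 0 := by
    rw [hZ1, hZ2, inner_matCol_mul]
    exact hH (Wᵀ i)
  have hMii := hM i i ▸ real_inner_div_norm_mul_norm_mem_Icc_of_inner_nonpos hinner
  exact ⟨hMii, by nlinarith [hMii.2]⟩

/-- **Step (1.b) of Proposition 1.** If `H = X̃₁ᵀ X̃₂` is negative semi-definite
as a quadratic form, then every diagonal entry of the cross-correlation matrix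
satisfies `−1 ≤ Mᵢᵢ ≤ 0`, and consequently `(Mᵢᵢ − 1)² ≥ 1`. -/
theorem diag_nonpos_of_nsd
    (n f d : ℕ) (hn : 0 < n) (hf : 0 < f) (hd : 0 < d)
    (X1 X2 : Matrix (Fin n) (Fin f) ℝ) (W : Matrix (Fin f) (Fin d) ℝ)
    (Z1 Z2 : Matrix (Fin n) (Fin d) ℝ)
    (hZ1 : Z1 = X1 * W) (hZ2 : Z2 = X2 * W)
    (hcol1 : ∀ i, matCol Z1 i ≠ 0) (hcol2 : ∀ i, matCol Z2 i ≠ 0)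
    (M : Matrix (Fin d) (Fin d) ℝ)
    (hM : ∀ i j, M i j = ⟪matCol Z1 i, matCol Z2 j⟫ / (‖matCol Z1 i‖ * ‖matCol Z2 j‖))
    (hH : ∀ x : Fin f → ℝ, x ⬝ᵥ ((X1ᵀ * X2) *ᵥ x) ≤ 0) :
    ∀ i, (-1 ≤ M i i ∧ M i i ≤ 0) ∧ 1 ≤ (M i i - 1) ^ 2 :=
  diag_nonpos_of_nsd_general n f d X1 X2 W Z1 Z2 hZ1 hZ2 M hM hH
end
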